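/- Let (T, T̄, (-)°, m) be an idealized monad on a category C with finite coproducts. Then weak guardedness — where f : X → TY is weakly σ-guarded for a summand σ : Z ↪ Y with complement σ̄ : Y' ↪ Y if f factors through [η∘σ̄, m]* : T(Y' + T̄Y) → TY — makes the Kleisli category of T into an abstractly guarded category, i.e., weak guardedness is closed under the rules (trv), (par), and (cmp). -/

import Mathlib

open CategoryTheory CategoryTheory.Limits

universe v u

/-- `(σ, σ')` form a binary coproduct cospan, i.e. a summand together with its complement. -/
def IsCoprodCospan {C : Type u} [Category.{v} C] {Y' Y'' Y : C}
    (σ : Y' ⟶ Y) (σ' : Y'' ⟶ Y) : Prop :=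
  Nonempty (IsColimit (BinaryCofan.mk σ σ'))

/-- An idealized monad: a monad `(obj, η, bind)` in Kleisli-triple form, together with a
module `(mobj, mlift)` over it and a module-to-monad morphism `m : mobj ⟶ obj`. -/
structure IdealizedMonad (C : Type u) [Category.{v} C] where
  obj : C → C
  η : ∀ X : C, X ⟶ obj X
  bind : ∀ {X Y : C}, (X ⟶ obj Y) → (obj X ⟶ obj Y)
  η_bind : ∀ {X Y : C} (f : X ⟶ obj Y), η X ≫ bind f = f
  bind_η : ∀ X : C, bind (η X) = 𝟙 (obj X)
  bind_comp : ∀ {X Y Z : C} (f : X ⟶ obj Y) (g : Y ⟶ obj Z),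
      bind (f ≫ bind g) = bind f ≫ bind g
  /-- The module carrier. -/
  mobj : C → C
  /-- The module lifting `f ↦ f°`. -/
  mlift : ∀ {X Y : C}, (X ⟶ obj Y) → (mobj X ⟶ mobj Y)
  mlift_η : ∀ X : C, mlift (η X) = 𝟙 (mobj X)
  mlift_comp : ∀ {X Y Z : C} (f : X ⟶ obj Y) (g : Y ⟶ obj Z),
      mlift (f ≫ bind g) = mlift f ≫ mlift g
  /-- The module-to-monad morphism. -/
  m : ∀ X : C, mobj X ⟶ obj X
  m_natural : ∀ {X Y : C} (f : X ⟶ obj Y), mlift f ≫ m Y = m X ≫ bind f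

/-- `f : X ⟶ T Y` is weakly `σ`-guarded for a summand `σ` with complement `σ' : Y' ⟶ Y`
if `f` factors through `[η ∘ σ', m]* : T(Y' + T̄Y) ⟶ TY`. -/
def IdealizedMonad.WeaklyGuarded {C : Type u} [Category.{v} C] [HasBinaryCoproducts C]
    (T : IdealizedMonad C) {X Y' Y : C} (f : X ⟶ T.obj Y) (σ' : Y' ⟶ Y) : Prop :=
  ∃ g : X ⟶ T.obj (Y' ⨿ T.mobj Y),
    f = g ≫ T.bind (coprod.desc (σ' ≫ T.η Y) (T.m Y))

namespace IdealizedMonad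

variable {C : Type u} [Category.{v} C] [HasBinaryCoproducts C] (T : IdealizedMonad C)

lemma weaklyGuarded_comp_bind_η {X Y Y' : C} (f : X ⟶ T.obj Y') (σ' : Y' ⟶ Y) :
    T.WeaklyGuarded (f ≫ T.bind (σ' ≫ T.η Y)) σ' := by
  refine ⟨f ≫ T.bind (coprod.inl ≫ T.η _), ?_⟩
  rw [Category.assoc, ← T.bind_comp, Category.assoc, T.η_bind, coprod.inl_desc]

variable {T}

lemma WeaklyGuarded.of_isColimit {X Y P Z' Z : C} {j₁ : X ⟶ P} {j₂ : Y ⟶ P}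
    (hP : IsColimit (BinaryCofan.mk j₁ j₂)) {σ' : Z' ⟶ Z} {u : P ⟶ T.obj Z}
    (h₁ : T.WeaklyGuarded (j₁ ≫ u) σ') (h₂ : T.WeaklyGuarded (j₂ ≫ u) σ') :
    T.WeaklyGuarded u σ' := by
  obtain ⟨g₁, hg₁⟩ := h₁
  obtain ⟨g₂, hg₂⟩ := h₂
  refine ⟨BinaryCofan.IsColimit.desc hP g₁ g₂, BinaryCofan.IsColimit.hom_ext hP ?_ ?_⟩
  · exact hg₁.trans (BinaryCofan.IsColimit.inl_desc_assoc hP g₁ g₂ _).symm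
  · exact hg₂.trans (BinaryCofan.IsColimit.inr_desc_assoc hP g₁ g₂ _).symm

lemma WeaklyGuarded.comp_bind {X Y' P V' V : C} {i : Y' ⟶ P} {σ' : V' ⟶ V}
    {f : X ⟶ T.obj P} {u : P ⟶ T.obj V}
    (hf : T.WeaklyGuarded f i) (hu : T.WeaklyGuarded (i ≫ u) σ') :
    T.WeaklyGuarded (f ≫ T.bind u) σ' := by
  obtain ⟨g, rfl⟩ := hf
  obtain ⟨h, hh⟩ := hu
  -- The guarded part `i` is handled by `h`; on the module part, `m ∘ u° = u* ∘ m`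
  -- lets `u°` stand in for `u`, so it needs no guard of its own.
  have reroute : coprod.desc h (T.mlift u ≫ coprod.inr ≫ T.η _) ≫
        T.bind (coprod.desc (σ' ≫ T.η V) (T.m V)) =
      coprod.desc (i ≫ T.η P) (T.m P) ≫ T.bind u := by
    apply coprod.hom_ext
    · rw [coprod.inl_desc_assoc, coprod.inl_desc_assoc, Category.assoc, T.η_bind, hh]
    · rw [coprod.inr_desc_assoc, coprod.inr_desc_assoc, Category.assoc, Category.assoc,
        T.η_bind, coprod.inr_desc, T.m_natural]
  refine ⟨g ≫ T.bind (coprod.desc h (T.mlift u ≫ coprod.inr ≫ T.η _)), ?_⟩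
  rw [Category.assoc, Category.assoc, ← T.bind_comp, ← T.bind_comp, reroute]

end IdealizedMonad

-- A summand is passed to `WeaklyGuarded` as its complement, so in (trv) `i₁` stands for the guard `i₂`.
theorem weak_guardedness_abstractly_guarded {C : Type u} [Category.{v} C]
    [HasBinaryCoproducts C] (T : IdealizedMonad C) :
    -- (trv)
    (∀ (X Y Z P : C) (i₁ : Y ⟶ P) (i₂ : Z ⟶ P), IsCoprodCospan i₁ i₂ →
      ∀ f : X ⟶ T.obj Y, T.WeaklyGuarded (f ≫ T.bind (i₁ ≫ T.η P)) i₁) ∧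
    -- (par)
    (∀ (X Y P Z'' Z : C) (j₁ : X ⟶ P) (j₂ : Y ⟶ P), IsCoprodCospan j₁ j₂ →
      ∀ (σ' : Z'' ⟶ Z) (u : P ⟶ T.obj Z),
        T.WeaklyGuarded (j₁ ≫ u) σ' → T.WeaklyGuarded (j₂ ≫ u) σ' →
        T.WeaklyGuarded u σ') ∧
    -- (cmp)
    (∀ (X Y Z P V'' V : C) (i₁ : Y ⟶ P) (i₂ : Z ⟶ P), IsCoprodCospan i₁ i₂ →
      ∀ (σ' : V'' ⟶ V) (f : X ⟶ T.obj P) (u : P ⟶ T.obj V),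
        T.WeaklyGuarded f i₁ → T.WeaklyGuarded (i₁ ≫ u) σ' →
        T.WeaklyGuarded (f ≫ T.bind u) σ') := by
  refine ⟨?_, ?_, ?_⟩
  · intro X Y Z P i₁ i₂ _ f
    exact T.weaklyGuarded_comp_bind_η f i₁
  · intro X Y P Z'' Z j₁ j₂ ⟨hP⟩ σ' u h₁ h₂
    exact .of_isColimit hP h₁ h₂
  · intro X Y Z P V'' V i₁ i₂ _ σ' f u hf hu
    exact hf.comp_bind hu
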